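/- arXiv:2502.09094 — 5 statements merged into one kernel-verified Lean document; each statement's English description precedes it below -/
import Mathlib

section
/- Let b be a rational, non-inner function in the closed unit ball of H^∞ with ‖b‖_∞ = 1, Pythagorean mate a with zeros ζ₁,…,ζ_l on 𝕋 of multiplicities m₁,…,m_l. If a sequence Λ = (λ_n) in 𝔻 is universal interpolating for H(b), then Σ_{n∈ℕ} (1−|λ_n|²)/|ζ_j−λ_n|^{2m_j} < ∞ for every 1 ≤ j ≤ l. -/
open Complex MeasureTheory Metric Set Finset Filter ProbabilityTheory Polynomial
open scoped ENNReal NNReal Topology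

noncomputable section

/-- Membership in the Hardy space `H²` of the unit disk: `f` is holomorphic on `𝔻` and the
mean-square integrals over circles of radius `r < 1` are uniformly bounded. -/
def MemHardy2 (f : ℂ → ℂ) : Prop :=
  DifferentiableOn ℂ f (ball (0 : ℂ) 1) ∧
  ∃ C : ℝ, ∀ r : ℝ, 0 < r → r < 1 →
    (1 / (2 * Real.pi)) * ∫ t in (0 : ℝ)..(2 * Real.pi),
      ‖f ((r : ℂ) * Complex.exp ((t : ℂ) * Complex.I))‖ ^ 2 ≤ C

/-- The squared `H²` norm of `f`, as the supremum of the circle means. -/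
def h2NormSq (f : ℂ → ℂ) : ℝ :=
  sSup {y : ℝ | ∃ r : ℝ, 0 < r ∧ r < 1 ∧
    y = (1 / (2 * Real.pi)) * ∫ t in (0 : ℝ)..(2 * Real.pi),
      ‖f ((r : ℂ) * Complex.exp ((t : ℂ) * Complex.I))‖ ^ 2}

/-- Membership in the de Branges-Rovnyak space `H(b)`, where `b` is rational and non-extreme
with Pythagorean mate `a` whose zeros on the circle are `ζ j` with multiplicities `m j`:
`f = ∏ (z - ζ j)^(m j) · g + p` on `𝔻` with `g ∈ H²` and `p` a polynomial of degree `< ∑ m j`. -/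
def MemHb {l : ℕ} (ζ : Fin l → ℂ) (m : Fin l → ℕ) (f : ℂ → ℂ) : Prop :=
  ∃ (g : ℂ → ℂ) (p : Polynomial ℂ), MemHardy2 g ∧ p.degree < ((∑ j, m j : ℕ) : ℕ) ∧
    ∀ z ∈ ball (0 : ℂ) 1, f z = (∏ j, (z - ζ j) ^ m j) * g z + p.eval z

/-- The Carleson condition: the pseudohyperbolic products `∏_{k ≠ n} ρ(Λ n, Λ k)` are
uniformly bounded below (formulated over all finite subsets not containing `n`). -/
def CarlesonCond (Λ : ℕ → ℂ) : Prop :=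
  ∃ δ : ℝ, 0 < δ ∧ ∀ n : ℕ, ∀ F : Finset ℕ, n ∉ F →
    δ ≤ ∏ k ∈ F, ‖(Λ n - Λ k) / (1 - (starRingEnd ℂ) (Λ k) * Λ n)‖

/-- `Λ` is universal interpolating for `H(b)`: the restriction map
`f ↦ (f(Λ n)/‖k^b_{Λ n}‖)` is bounded from `H(b)` into `ℓ²` and onto `ℓ²`.  Here
`‖k^b_λ‖² = (1-|b(λ)|²)/(1-|λ|²)`, and the `H(b)` norm of `f = ∏(z-ζ_j)^{m_j} g + p` is
`(‖g‖² + ‖p‖²)^{1/2}`. -/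
def UnivInterp {l : ℕ} (ζ : Fin l → ℂ) (m : Fin l → ℕ) (b : ℂ → ℂ) (Λ : ℕ → ℂ) : Prop :=
  (∃ C : ℝ, ∀ (g : ℂ → ℂ) (p : Polynomial ℂ), MemHardy2 g → p.degree < ((∑ j, m j : ℕ) : ℕ) →
    ∀ F : Finset ℕ,
      ∑ n ∈ F, ‖(∏ j, (Λ n - ζ j) ^ m j) * g (Λ n) + p.eval (Λ n)‖ ^ 2 *
          ((1 - ‖Λ n‖ ^ 2) / (1 - ‖b (Λ n)‖ ^ 2)) ≤
        C * (h2NormSq g + h2NormSq fun z => p.eval z)) ∧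
  ∀ w : ℕ → ℂ, Summable (fun n => ‖w n‖ ^ 2) →
    ∃ f : ℂ → ℂ, MemHb ζ m f ∧
      ∀ n, f (Λ n) * (Real.sqrt ((1 - ‖Λ n‖ ^ 2) / (1 - ‖b (Λ n)‖ ^ 2)) : ℂ) = w n

/-- `Λ` is multiplier interpolating for `H(b)`: every bounded sequence can be interpolated
by a multiplier of `H(b)`. -/
def MultInterp {l : ℕ} (ζ : Fin l → ℂ) (m : Fin l → ℕ) (Λ : ℕ → ℂ) : Prop :=
  ∀ v : ℕ → ℂ, (∃ C : ℝ, ∀ n, ‖v n‖ ≤ C) →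
    ∃ φ : ℂ → ℂ, (∀ f : ℂ → ℂ, MemHb ζ m f → MemHb ζ m fun z => φ z * f z) ∧
      ∀ n, φ (Λ n) = v n


/-!
Testing the boundedness of the restriction map on the constant function `1` (which lies in
`H(b)` because `N ≥ 1`) shows that the weights `(1 - |λₙ|²)/(1 - |b(λₙ)|²)` are summable, and
surjectivity makes them positive. So it suffices to bound `1 - |b|²` from above by a multiple of
`(1 - |z|²) + |ζⱼ - z|^{2mⱼ}`. On the circle `1 - |b|² = |a|²`, which vanishes to order `mⱼ`
at `ζⱼ`; inside the disk this transfers from the nearest point of the circle, because both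
sides are Lipschitz on the closed disk and that point is at distance `1 - |z|`. Finally, a series
`∑ xₙ/(xₙ + Aₙ)` can only converge if eventually `xₙ < Aₙ`, hence `∑ xₙ/Aₙ` converges too.
-/

section Comparison

variable {E : Type*} [NormedAddCommGroup E] [NormedSpace ℝ E] [Nontrivial E]

theorem exists_norm_eq_one_dist_eq {z : E} (hz : ‖z‖ ≤ 1) :
    ∃ w : E, ‖w‖ = 1 ∧ dist z w = 1 - ‖z‖ := by
  rcases eq_or_ne z 0 with rfl | hz0
  · obtain ⟨w, hw⟩ := exists_norm_eq E zero_le_one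
    exact ⟨w, hw, by simp [hw]⟩
  · have hr : 0 < ‖z‖ := norm_pos_iff.2 hz0
    refine ⟨‖z‖⁻¹ • z, by simp [norm_smul, hr.ne'], ?_⟩
    have hsub : z - ‖z‖⁻¹ • z = (1 - ‖z‖⁻¹) • z := by rw [sub_smul, one_smul]
    rw [dist_eq_norm, hsub, norm_smul, Real.norm_eq_abs,
      abs_of_nonpos (by linarith [one_le_inv_iff₀.2 ⟨hr, hz⟩])]
    field_simp
    ring

theorem le_mul_add_of_le_mul_on_sphere {u v : E → ℝ} {Ku Kv : ℝ≥0} {C : ℝ}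
    (hu : LipschitzOnWith Ku u (closedBall 0 1)) (hv : LipschitzOnWith Kv v (closedBall 0 1))
    (hC : 0 ≤ C) (huv : ∀ w : E, ‖w‖ = 1 → u w ≤ C * v w) {z : E} (hz : ‖z‖ ≤ 1) :
    u z ≤ C * v z + (C * Kv + Ku) * (1 - ‖z‖) := by
  obtain ⟨w, hw, hzw⟩ := exists_norm_eq_one_dist_eq hz
  have hzB : z ∈ closedBall (0 : E) 1 := mem_closedBall_zero_iff.2 hz
  have hwB : w ∈ closedBall (0 : E) 1 := mem_closedBall_zero_iff.2 hw.le
  have hu' : u z - u w ≤ Ku * dist z w := (le_abs_self _).trans (hu.dist_le_mul z hzB w hwB)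
  have hv' : v w - v z ≤ Kv * dist z w :=
    (le_abs_self _).trans ((hv.dist_le_mul w hwB z hzB).trans_eq (by rw [dist_comm]))
  calc u z ≤ C * v w + Ku * dist z w := by linarith [huv w hw]
    _ ≤ C * (v z + Kv * dist z w) + Ku * dist z w := by gcongr; linarith
    _ = C * v z + (C * Kv + Ku) * (1 - ‖z‖) := by rw [hzw]; ring

end Comparison

theorem summable_div_of_summable_div_add {x A : ℕ → ℝ} (hx : ∀ n, 0 ≤ x n)
    (hA : ∀ n, 0 ≤ A n) (h : Summable fun n => x n / (x n + A n)) :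
    Summable fun n => x n / A n := by
  refine (h.mul_left 2).of_norm_bounded_eventually ?_
  filter_upwards [h.tendsto_cofinite_zero.eventually (gt_mem_nhds one_half_pos)] with n hn
  rw [Real.norm_of_nonneg (div_nonneg (hx n) (hA n))]
  rcases (hx n).eq_or_lt with h0 | hpos
  · simp [← h0]
  have hxA : x n < A n := by
    rw [div_lt_iff₀ (by linarith [hA n])] at hn
    linarith
  rw [← mul_div_assoc, div_le_div_iff₀ (by linarith) (by linarith)]
  nlinarith

theorem Polynomial.contDiff_eval (P : ℂ[X]) : ContDiff ℂ 1 fun z => P.eval z := by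
  simpa using P.contDiff_aeval (𝕜 := ℂ) 1

theorem exists_lipschitzOnWith_one_sub_norm_sq {b : ℂ → ℂ} {P Q : ℂ[X]}
    (hQ : ∀ z : ℂ, ‖z‖ ≤ 1 → Q.eval z ≠ 0) (hb : ∀ z : ℂ, ‖z‖ ≤ 1 → b z = P.eval z / Q.eval z) :
    ∃ K, LipschitzOnWith K (fun z => 1 - ‖b z‖ ^ 2) (closedBall 0 1) := by
  have hQ' : ∀ z ∈ closedBall (0 : ℂ) 1, Q.eval z ≠ 0 :=
    fun z hz => hQ z (mem_closedBall_zero_iff.1 hz)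
  have hPQ : ContDiffOn ℂ 1 (fun z => P.eval z / Q.eval z) (closedBall 0 1) :=
    P.contDiff_eval.contDiffOn.div Q.contDiff_eval.contDiffOn hQ'
  obtain ⟨K, hK⟩ := ((contDiffOn_const (c := (1 : ℝ))).sub ((contDiff_norm_sq ℝ).comp_contDiffOn
    (hPQ.restrict_scalars ℝ))).exists_lipschitzOnWith one_ne_zero (convex_closedBall 0 1)
    (isCompact_closedBall 0 1)
  refine ⟨K, fun z hz w hw => ?_⟩
  have hzw := hK hz hw
  simp only [Function.comp_apply] at hzw
  simp only
  rwa [hb z (mem_closedBall_zero_iff.1 hz), hb w (mem_closedBall_zero_iff.1 hw)]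

theorem exists_norm_sq_le_mul_of_eq_prod {l : ℕ} {ζ : Fin l → ℂ} {m : Fin l → ℕ} {a : ℂ → ℂ}
    {P Q : ℂ[X]} (hQ : ∀ z : ℂ, ‖z‖ ≤ 1 → Q.eval z ≠ 0)
    (ha : ∀ z : ℂ, ‖z‖ ≤ 1 → a z = (∏ j, (z - ζ j) ^ m j) * P.eval z / Q.eval z) (j : Fin l) :
    ∃ C, 0 ≤ C ∧ ∀ z : ℂ, ‖z‖ ≤ 1 → ‖a z‖ ^ 2 ≤ C * ‖ζ j - z‖ ^ (2 * m j) := by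
  set h : ℂ → ℂ := fun z => (∏ i ∈ univ.erase j, (z - ζ i) ^ m i) * P.eval z / Q.eval z
  have hcont : ContinuousOn h (closedBall 0 1) := by
    have hQ' : ∀ z ∈ closedBall (0 : ℂ) 1, Q.eval z ≠ 0 :=
      fun z hz => hQ z (mem_closedBall_zero_iff.1 hz)
    fun_prop (disch := assumption)
  obtain ⟨B, hB⟩ := (isCompact_closedBall (0 : ℂ) 1).exists_bound_of_continuousOn hcont
  refine ⟨B ^ 2, sq_nonneg B, fun z hz => ?_⟩
  have hfactor : a z = (z - ζ j) ^ m j * h z := by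
    rw [ha z hz, ← mul_prod_erase univ _ (mem_univ j)]
    ring
  have hhB : ‖h z‖ ≤ B := hB z (mem_closedBall_zero_iff.2 hz)
  rw [hfactor, norm_mul, mul_pow, norm_pow, ← pow_mul, mul_comm (m j), norm_sub_rev, mul_comm]
  gcongr

theorem exists_one_sub_norm_sq_le {l : ℕ} {ζ : Fin l → ℂ} {m : Fin l → ℕ} {a b : ℂ → ℂ}
    {P Q Pa Qa : ℂ[X]} (hQ : ∀ z : ℂ, ‖z‖ ≤ 1 → Q.eval z ≠ 0)
    (hb : ∀ z : ℂ, ‖z‖ ≤ 1 → b z = P.eval z / Q.eval z) (hQa : ∀ z : ℂ, ‖z‖ ≤ 1 → Qa.eval z ≠ 0)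
    (ha : ∀ z : ℂ, ‖z‖ ≤ 1 → a z = (∏ j, (z - ζ j) ^ m j) * Pa.eval z / Qa.eval z)
    (hab : ∀ z : ℂ, ‖z‖ = 1 → ‖a z‖ ^ 2 + ‖b z‖ ^ 2 = 1) (j : Fin l) :
    ∃ K, ∀ z : ℂ, ‖z‖ ≤ 1 → 1 - ‖b z‖ ^ 2 ≤ K * ((1 - ‖z‖ ^ 2) + ‖ζ j - z‖ ^ (2 * m j)) := by
  obtain ⟨C, hC, haC⟩ := exists_norm_sq_le_mul_of_eq_prod hQa ha j
  obtain ⟨Ku, hu⟩ := exists_lipschitzOnWith_one_sub_norm_sq hQ hb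
  have hv_smooth : ContDiff ℝ 1 fun z : ℂ => ‖ζ j - z‖ ^ (2 * m j) := by
    simp_rw [pow_mul]
    exact ((contDiff_norm_sq ℝ).comp (contDiff_const.sub contDiff_id)).pow _
  obtain ⟨Kv, hv⟩ := hv_smooth.contDiffOn.exists_lipschitzOnWith one_ne_zero (convex_closedBall 0 1)
    (isCompact_closedBall 0 1)
  have hsphere : ∀ w : ℂ, ‖w‖ = 1 → 1 - ‖b w‖ ^ 2 ≤ C * ‖ζ j - w‖ ^ (2 * m j) :=
    fun w hw => by linarith [hab w hw, haC w hw.le]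
  refine ⟨C + (C * Kv + Ku), fun z hz => ?_⟩
  have hdist : 1 - ‖z‖ ≤ 1 - ‖z‖ ^ 2 := by nlinarith [norm_nonneg z]
  have hx : 0 ≤ 1 - ‖z‖ ^ 2 := by linarith [norm_nonneg z]
  have hpow : 0 ≤ ‖ζ j - z‖ ^ (2 * m j) := by positivity
  have hK : 0 ≤ C * Kv + Ku := by positivity
  calc 1 - ‖b z‖ ^ 2 ≤ C * ‖ζ j - z‖ ^ (2 * m j) + (C * Kv + Ku) * (1 - ‖z‖) :=
        le_mul_add_of_le_mul_on_sphere hu hv hC hsphere hz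
    _ ≤ C * ‖ζ j - z‖ ^ (2 * m j) + (C * Kv + Ku) * (1 - ‖z‖ ^ 2) := by gcongr
    _ ≤ (C + (C * Kv + Ku)) * ((1 - ‖z‖ ^ 2) + ‖ζ j - z‖ ^ (2 * m j)) := by
        nlinarith [mul_nonneg hC hx, mul_nonneg hK hpow]

namespace UnivInterp

variable {l : ℕ} {ζ : Fin l → ℂ} {m : Fin l → ℕ} {b : ℂ → ℂ} {Λ : ℕ → ℂ}

theorem weight_pos (h : UnivInterp ζ m b Λ) (n : ℕ) :
    0 < (1 - ‖Λ n‖ ^ 2) / (1 - ‖b (Λ n)‖ ^ 2) := by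
  obtain ⟨f, -, hf⟩ := h.2 (Pi.single n 1) (summable_of_ne_finset_zero (s := {n})
    fun k hk => by simp [Finset.mem_singleton.not.1 hk])
  by_contra hle
  simpa [Real.sqrt_eq_zero'.2 (not_lt.1 hle)] using hf n

theorem summable_weight (h : UnivInterp ζ m b Λ) (hN : 0 < ∑ j, m j) :
    Summable fun n => (1 - ‖Λ n‖ ^ 2) / (1 - ‖b (Λ n)‖ ^ 2) := by
  obtain ⟨C, hC⟩ := h.1
  have hzero : MemHardy2 fun _ => 0 := ⟨differentiableOn_const 0, 0, fun _ _ _ => by simp⟩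
  have hdeg : (1 : ℂ[X]).degree < ((∑ j, m j : ℕ) : WithBot ℕ) := by
    rw [degree_one]
    exact_mod_cast hN
  refine summable_of_sum_le (c := C * (h2NormSq (fun _ => 0) + h2NormSq fun z => eval z 1))
    (fun n => (h.weight_pos n).le) fun F => ?_
  simpa using hC (fun _ => 0) 1 hzero hdeg F

theorem summable_of_one_sub_norm_sq_le (h : UnivInterp ζ m b Λ) (hN : 0 < ∑ j, m j)
    (hΛ : ∀ n, ‖Λ n‖ < 1) {A : ℕ → ℝ} (hA : ∀ n, 0 ≤ A n) {K : ℝ}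
    (hK : ∀ n, 1 - ‖b (Λ n)‖ ^ 2 ≤ K * ((1 - ‖Λ n‖ ^ 2) + A n)) :
    Summable fun n => (1 - ‖Λ n‖ ^ 2) / A n := by
  have hx : ∀ n, 0 < 1 - ‖Λ n‖ ^ 2 := fun n => by nlinarith [norm_nonneg (Λ n), hΛ n]
  refine summable_div_of_summable_div_add (fun n => (hx n).le) hA
    (.of_nonneg_of_le (fun n => div_nonneg (hx n).le (by linarith [hx n, hA n]))
      (fun n => ?_) ((h.summable_weight hN).mul_left K))
  have hD : 0 < 1 - ‖b (Λ n)‖ ^ 2 := (div_pos_iff_of_pos_left (hx n)).1 (h.weight_pos n)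
  rw [← mul_div_assoc, div_le_div_iff₀ (by linarith [hx n, hA n]) hD]
  nlinarith [mul_le_mul_of_nonneg_left (hK n) (hx n).le]

end UnivInterp

theorem statement3_general
    (b a : ℂ → ℂ) (l : ℕ) (ζ : Fin l → ℂ) (m : Fin l → ℕ)
    (hm : ∀ j, 1 ≤ m j)
    (hb_rat : ∃ P Q : Polynomial ℂ, (∀ z : ℂ, ‖z‖ ≤ 1 → Q.eval z ≠ 0) ∧
      ∀ z : ℂ, ‖z‖ ≤ 1 → b z = P.eval z / Q.eval z)
    (ha_form : ∃ P Q : Polynomial ℂ, (∀ z : ℂ, ‖z‖ ≤ 1 → P.eval z ≠ 0 ∧ Q.eval z ≠ 0) ∧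
      ∀ z : ℂ, ‖z‖ ≤ 1 → a z = (∏ j, (z - ζ j) ^ m j) * P.eval z / Q.eval z)
    (hab : ∀ z : ℂ, ‖z‖ = 1 → ‖a z‖ ^ 2 + ‖b z‖ ^ 2 = 1)
    (Λ : ℕ → ℂ) (hΛ : ∀ n, ‖Λ n‖ < 1)
    (hinterp : UnivInterp ζ m b Λ) :
    ∀ j, Summable fun n => (1 - ‖Λ n‖ ^ 2) / ‖ζ j - Λ n‖ ^ (2 * m j) := by
  intro j
  obtain ⟨P, Q, hQ, hb⟩ := hb_rat
  obtain ⟨Pa, Qa, hPQa, ha⟩ := ha_form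
  obtain ⟨K, hK⟩ := exists_one_sub_norm_sq_le hQ hb (fun z hz => (hPQa z hz).2) ha hab j
  have hN : 0 < ∑ i, m i := sum_pos (fun i _ => hm i) ⟨j, mem_univ j⟩
  exact hinterp.summable_of_one_sub_norm_sq_le hN hΛ (fun n => by positivity)
    fun n => hK (Λ n) (hΛ n).le

/-- **Lemma.** Let `b` be a rational, non-inner function in the closed unit ball of `H^∞` with
`‖b‖_∞ = 1`, with Pythagorean mate `a` whose zeros on `𝕋` are `ζ 1, …, ζ l` with multiplicities
`m 1, …, m l`.  If a sequence `Λ` in `𝔻` is universal interpolating for `H(b)`, then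
`∑_n (1-|Λ n|²)/|ζ j - Λ n|^{2 m j} < ∞` for every `1 ≤ j ≤ l`. -/
theorem statement3
    (b a : ℂ → ℂ) (l : ℕ) (ζ : Fin l → ℂ) (m : Fin l → ℕ)
    (hζ : ∀ j, ‖ζ j‖ = 1) (hζinj : Function.Injective ζ) (hm : ∀ j, 1 ≤ m j)
    (hb_rat : ∃ P Q : Polynomial ℂ, (∀ z : ℂ, ‖z‖ ≤ 1 → Q.eval z ≠ 0) ∧
      ∀ z : ℂ, ‖z‖ ≤ 1 → b z = P.eval z / Q.eval z)
    (hb_le : ∀ z : ℂ, ‖z‖ ≤ 1 → ‖b z‖ ≤ 1)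
    (hb_norm : ∃ z : ℂ, ‖z‖ = 1 ∧ ‖b z‖ = 1)
    (hb_noninner : ∃ z : ℂ, ‖z‖ = 1 ∧ ‖b z‖ < 1)
    (ha_form : ∃ P Q : Polynomial ℂ, (∀ z : ℂ, ‖z‖ ≤ 1 → P.eval z ≠ 0 ∧ Q.eval z ≠ 0) ∧
      ∀ z : ℂ, ‖z‖ ≤ 1 → a z = (∏ j, (z - ζ j) ^ m j) * P.eval z / Q.eval z)
    (ha_le : ∀ z : ℂ, ‖z‖ ≤ 1 → ‖a z‖ ≤ 1)
    (ha0 : 0 < (a 0).re ∧ (a 0).im = 0)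
    (hab : ∀ z : ℂ, ‖z‖ = 1 → ‖a z‖ ^ 2 + ‖b z‖ ^ 2 = 1)
    (Λ : ℕ → ℂ) (hΛ : ∀ n, ‖Λ n‖ < 1)
    (hinterp : UnivInterp ζ m b Λ) :
    ∀ j, Summable fun n => (1 - ‖Λ n‖ ^ 2) / ‖ζ j - Λ n‖ ^ (2 * m j) :=
  statement3_general b a l ζ m hm hb_rat ha_form hab Λ hΛ hinterp
end
end

section
/- For every integer N ≥ 1 and every λ ∈ 𝔻, the quantity D₁^N(φ_λ) := (1/2π)∫₀^{2π} |(φ_λ(e^{it}) − T_{N−1}(φ_λ,1)(e^{it}))/(e^{it}−1)^N|² dt equals (1−|λ|²)·|λ|^{2(N−1)} / |1−λ|^{2N}. -/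
/-!
The Taylor remainder of `φ_λ` at `1` is explicit: since
`φ_λ^{(j)}(z) = j! (1 - |λ|²) λ̄^{j-1} / (1 - λ̄ z)^{j+1}` for `j ≥ 1`,
`φ_λ(z) - T_{N-1}(φ_λ, 1)(z) = (1 - |λ|²) λ̄^{N-1} (z - 1)^N / ((1 - λ̄)^N (1 - λ̄ z))`.
On the unit circle `|1 - λ̄ z| = |z - λ|`, so away from `z = 1` the integrand of `D₁^N(φ_λ)`
is `|λ|^{2(N-1)} / |1 - λ|^{2N}` times the Poisson kernel `(1 - |λ|²) / |z - λ|²`, whose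
average over the circle is `1`.
-/

open Complex Finset

noncomputable section

/-- The Blaschke (Möbius) factor at `λ ∈ 𝔻`. -/
def blaschke (lam : ℂ) : ℂ → ℂ := fun z => (z - lam) / (1 - (starRingEnd ℂ) lam * z)

open Metric ComplexConjugate Nat Topology

theorem Real.circleAverage_poissonKernel {c w : ℂ} {R : ℝ} (hw : w ∈ ball c R) :
    Real.circleAverage (poissonKernel c w) c R = 1 := by
  have h := (diffContOnCl_const (c := (1 : ℂ))).circleAverage_poissonKernel_smul hw
  apply Complex.ofReal_injective
  simpa [Real.circleAverage_def, intervalIntegral.integral_ofReal] using h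

theorem norm_one_sub_conj_mul {z : ℂ} (a : ℂ) (hz : ‖z‖ = 1) : ‖1 - conj a * z‖ = ‖z - a‖ := by
  have : 1 - conj a * z = z * conj (z - a) := by
    rw [map_sub, mul_sub, mul_conj', hz]; push_cast; ring
  rw [this, norm_mul, hz, one_mul, norm_conj]

theorem hasDerivAt_div_one_sub_mul_pow (A a : ℂ) (k : ℕ) {z : ℂ} (hz : 1 - a * z ≠ 0) :
    HasDerivAt (fun w ↦ A / (1 - a * w) ^ (k + 1))
      ((k + 1) * a * A / (1 - a * z) ^ (k + 2)) z := by
  have h : HasDerivAt (fun w ↦ (1 - a * w) ^ (k + 1)) ((k + 1) * (1 - a * z) ^ k * -a) z := by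
    simpa using (((hasDerivAt_id z).const_mul a).const_sub 1).fun_pow (k + 1)
  refine ((hasDerivAt_const z A).fun_div h (pow_ne_zero _ hz)).congr_deriv ?_
  field_simp
  ring

theorem hasDerivAt_blaschke (lam : ℂ) {z : ℂ} (hz : 1 - conj lam * z ≠ 0) :
    HasDerivAt (blaschke lam) ((1 - lam * conj lam) / (1 - conj lam * z) ^ 2) z := by
  have h : HasDerivAt (fun w ↦ 1 - conj lam * w) (-conj lam) z := by
    simpa using ((hasDerivAt_id z).const_mul (conj lam)).const_sub 1
  refine (((hasDerivAt_id z).sub_const lam).fun_div h hz).congr_deriv ?_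
  simp only [id]
  ring

theorem iteratedDeriv_succ_blaschke (lam : ℂ) (j : ℕ) {z : ℂ} (hz : 1 - conj lam * z ≠ 0) :
    iteratedDeriv (j + 1) (blaschke lam) z =
      (j + 1)! * (1 - lam * conj lam) * conj lam ^ j / (1 - conj lam * z) ^ (j + 2) := by
  induction j generalizing z with
  | zero => simp [(hasDerivAt_blaschke lam hz).deriv]
  | succ j ih =>
    have hopen : IsOpen {w : ℂ | 1 - conj lam * w ≠ 0} :=
      isOpen_ne_fun (by fun_prop) continuous_const
    have hev : iteratedDeriv (j + 1) (blaschke lam) =ᶠ[𝓝 z]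
        fun w ↦ (j + 1)! * (1 - lam * conj lam) * conj lam ^ j / (1 - conj lam * w) ^ (j + 2) :=
      Filter.eventuallyEq_of_mem (hopen.mem_nhds hz) fun w hw ↦ ih hw
    rw [iteratedDeriv_succ, hev.deriv_eq, (hasDerivAt_div_one_sub_mul_pow _ _ _ hz).deriv]
    push_cast [factorial_succ]
    ring

theorem norm_one_sub_mul_conj {a : ℂ} (ha : ‖a‖ ≤ 1) : ‖1 - a * conj a‖ = 1 - ‖a‖ ^ 2 := by
  rw [mul_conj', ← ofReal_pow, ← ofReal_one, ← ofReal_sub, norm_real, Real.norm_of_nonneg]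
  nlinarith [norm_nonneg a]

theorem blaschke_sub_taylor (lam : ℂ) (n : ℕ) {z : ℂ} (h1 : 1 - conj lam ≠ 0)
    (hz : 1 - conj lam * z ≠ 0) :
    blaschke lam z - ∑ j ∈ range (n + 1),
        iteratedDeriv j (blaschke lam) 1 * (z - 1) ^ j / (j ! : ℂ) =
      (1 - lam * conj lam) * conj lam ^ n * (z - 1) ^ (n + 1) /
        ((1 - conj lam) ^ (n + 1) * (1 - conj lam * z)) := by
  induction n with
  | zero =>
    simp only [zero_add, range_one, sum_singleton, iteratedDeriv_zero, blaschke, mul_one,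
      pow_zero, pow_one, factorial_zero, cast_one, div_one]
    rw [div_sub_div _ _ hz h1, mul_comm (1 - conj lam)]
    congr 1
    ring
  | succ n ih =>
    have h1' : 1 - conj lam * 1 ≠ 0 := by rwa [mul_one]
    have hfac : ((n + 1)! : ℂ) ≠ 0 := Nat.cast_ne_zero.2 (factorial_ne_zero _)
    rw [sum_range_succ, ← sub_sub, ih, iteratedDeriv_succ_blaschke lam n h1', mul_one]
    field_simp
    ring

-- Junk value `0` at `z = 1`, a single point of the circle, hence invisible to circle averages.
def taylorRemainderQuotient (f : ℂ → ℂ) (N : ℕ) (z : ℂ) : ℂ :=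
  (f z - ∑ j ∈ range N, iteratedDeriv j f 1 * (z - 1) ^ j / (j ! : ℂ)) / (z - 1) ^ N

def localDirichletIntegral (f : ℂ → ℂ) (N : ℕ) : ℝ :=
  Real.circleAverage (fun z ↦ ‖taylorRemainderQuotient f N z‖ ^ 2) 0 1

theorem norm_taylorRemainderQuotient_blaschke_sq {lam z : ℂ} (n : ℕ) (hlam : ‖lam‖ < 1)
    (hz : ‖z‖ = 1) (hz1 : z ≠ 1) :
    ‖taylorRemainderQuotient (blaschke lam) (n + 1) z‖ ^ 2 =
      (1 - ‖lam‖ ^ 2) * ‖lam‖ ^ (2 * n) / ‖1 - lam‖ ^ (2 * (n + 1)) * poissonKernel 0 lam z := by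
  have hzlam : z - lam ≠ 0 := sub_ne_zero.2 fun h ↦ by simp [h] at hz; linarith
  have hlam1 : 1 - lam ≠ 0 := sub_ne_zero.2 fun h ↦ by simp [← h] at hlam
  have hconj : ‖1 - conj lam * z‖ = ‖z - lam‖ := norm_one_sub_conj_mul lam hz
  have hconj1 : ‖1 - conj lam‖ = ‖1 - lam‖ := by
    simpa using norm_one_sub_conj_mul lam (z := 1) (by simp)
  have h1 : 1 - conj lam ≠ 0 := norm_ne_zero_iff.1 (hconj1 ▸ norm_ne_zero_iff.2 hlam1)
  have hz' : 1 - conj lam * z ≠ 0 := norm_ne_zero_iff.1 (hconj ▸ norm_ne_zero_iff.2 hzlam)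
  rw [taylorRemainderQuotient, blaschke_sub_taylor lam n h1 hz']
  rw [mul_div_right_comm, mul_div_assoc, div_self (pow_ne_zero _ (sub_ne_zero.2 hz1)), mul_one]
  simp only [norm_div, norm_mul, norm_pow, norm_conj, hconj, hconj1,
    norm_one_sub_mul_conj hlam.le, poissonKernel, sub_zero, hz]
  ring

theorem localDirichletIntegral_blaschke {lam : ℂ} (n : ℕ) (hlam : ‖lam‖ < 1) :
    localDirichletIntegral (blaschke lam) (n + 1) =
      (1 - ‖lam‖ ^ 2) * ‖lam‖ ^ (2 * n) / ‖1 - lam‖ ^ (2 * (n + 1)) := by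
  set C : ℝ := (1 - ‖lam‖ ^ 2) * ‖lam‖ ^ (2 * n) / ‖1 - lam‖ ^ (2 * (n + 1))
  have hae : (fun z ↦ ‖taylorRemainderQuotient (blaschke lam) (n + 1) z‖ ^ 2)
      =ᶠ[Filter.codiscreteWithin (sphere 0 |1|)] fun z ↦ C • poissonKernel 0 lam z := by
    filter_upwards [compl_singleton_mem_codiscreteWithin 1,
      Filter.self_mem_codiscreteWithin (sphere (0 : ℂ) |1|)] with z hz1 hz
    exact norm_taylorRemainderQuotient_blaschke_sq n hlam (by simpa using hz) hz1
  rw [localDirichletIntegral, Real.circleAverage_congr_codiscreteWithin hae one_ne_zero,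
    Real.circleAverage_fun_smul, Real.circleAverage_poissonKernel (mem_ball_zero_iff.2 hlam),
    smul_eq_mul, mul_one]

/-- **Lemma.** For every `N ≥ 1` and `λ ∈ 𝔻`, the local Dirichlet integral of order `N` at `1`
of the Blaschke factor `φ_λ`, namely
`D₁^N(φ_λ) = (1/2π) ∫₀^{2π} |(φ_λ(e^{it}) - T_{N-1}(φ_λ,1)(e^{it}))/(e^{it}-1)^N|² dt`,
equals `(1-|λ|²)·|λ|^{2(N-1)}/|1-λ|^{2N}`. -/
theorem statement5 (N : ℕ) (hN : 1 ≤ N) (lam : ℂ) (hlam : ‖lam‖ < 1) :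
    (1 / (2 * Real.pi)) * ∫ t in (0 : ℝ)..(2 * Real.pi),
        ‖(blaschke lam (Complex.exp ((t : ℂ) * Complex.I)) -
            ∑ j ∈ range N, iteratedDeriv j (blaschke lam) 1 *
              (Complex.exp ((t : ℂ) * Complex.I) - 1) ^ j / (j.factorial : ℂ))
          / (Complex.exp ((t : ℂ) * Complex.I) - 1) ^ N‖ ^ 2
      = (1 - ‖lam‖ ^ 2) * ‖lam‖ ^ (2 * (N - 1)) / ‖1 - lam‖ ^ (2 * N) := by
  obtain ⟨n, rfl⟩ := Nat.exists_eq_add_of_le' hN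
  simpa [localDirichletIntegral, taylorRemainderQuotient, Real.circleAverage_def, circleMap_zero]
    using localDirichletIntegral_blaschke n hlam
end
end

section
/- Let b be a rational, non-inner function in the closed unit ball of H^∞ with ‖b‖_∞ = 1. If Λ = (λ_n)_{n≥1} is a multiplier interpolating sequence for H(b) and λ₀ ∈ 𝔻 does not belong to Λ, then the augmented sequence (λ_n)_{n≥0} is multiplier interpolating for H(b). -/
/-!
Multipliers of `H(b)` lie in `H(b)` and are therefore continuous on the disk. Hence a multiplier
interpolating sequence cannot accumulate at a point `λ₀` of the disk outside it: interpolating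
`1` and `0` alternately along a subsequence tending to `λ₀` would contradict continuity at `λ₀`.
So `|λₙ - λ₀| ≥ δ > 0`, the difference quotients `(vₙ - v₀) / (λₙ - λ₀)` are bounded, and if `φ`
interpolates them then `v₀ + (z - λ₀) φ` interpolates `v` on the augmented sequence. It is a
multiplier because `H(b)` is stable under multiplication by polynomials: the degree bound on the
polynomial part is restored by division by `∏ (z - ζⱼ)^mⱼ`.
-/

open Complex MeasureTheory Metric Set Finset Filter ProbabilityTheory Polynomial
open scoped ENNReal NNReal Topology

noncomputable section

open Real in
theorem memHardy2_iff_circleAverage {f : ℂ → ℂ} :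
    MemHardy2 f ↔ DifferentiableOn ℂ f (ball 0 1) ∧
      ∃ C : ℝ, ∀ r : ℝ, 0 < r → r < 1 → circleAverage (fun z => ‖f z‖ ^ 2) 0 r ≤ C := by
  simp [MemHardy2, circleAverage_def, circleMap]

theorem circleIntegrable_of_continuousOn_ball {u : ℂ → ℝ} (hu : ContinuousOn u (ball 0 1))
    {r : ℝ} (hr0 : 0 < r) (hr1 : r < 1) : CircleIntegrable u 0 r :=
  (hu.mono (sphere_subset_ball hr1)).circleIntegrable hr0.le

open Real in
theorem MemHardy2.of_norm_le {f g h : ℂ → ℂ} {A B : ℝ}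
    (hf : DifferentiableOn ℂ f (ball 0 1)) (hg : MemHardy2 g) (hh : MemHardy2 h)
    (hle : ∀ z ∈ ball (0 : ℂ) 1, ‖f z‖ ≤ A * ‖g z‖ + B * ‖h z‖) :
    MemHardy2 f := by
  rw [memHardy2_iff_circleAverage] at hg hh ⊢
  obtain ⟨hgd, Cg, hCg⟩ := hg
  obtain ⟨hhd, Ch, hCh⟩ := hh
  refine ⟨hf, 2 * A ^ 2 * Cg + 2 * B ^ 2 * Ch, fun r hr0 hr1 => ?_⟩
  have hint {u : ℂ → ℝ} (hu : ContinuousOn u (ball 0 1)) : CircleIntegrable u 0 r :=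
    circleIntegrable_of_continuousOn_ball hu hr0 hr1
  have hfc := hf.continuousOn
  have hgc := hgd.continuousOn
  have hhc := hhd.continuousOn
  calc circleAverage (fun z => ‖f z‖ ^ 2) 0 r
      ≤ circleAverage (fun z => 2 * A ^ 2 * ‖g z‖ ^ 2 + 2 * B ^ 2 * ‖h z‖ ^ 2) 0 r := by
        refine circleAverage_mono (hint (by fun_prop)) (hint (by fun_prop)) fun z hz => ?_
        rw [abs_of_pos hr0] at hz
        have := hle z (sphere_subset_ball hr1 hz)
        nlinarith [norm_nonneg (f z), sq_nonneg (A * ‖g z‖ - B * ‖h z‖)]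
    _ = 2 * A ^ 2 * circleAverage (fun z => ‖g z‖ ^ 2) 0 r +
          2 * B ^ 2 * circleAverage (fun z => ‖h z‖ ^ 2) 0 r := by
        rw [circleAverage_fun_add (hint (by fun_prop)) (hint (by fun_prop))]
        simp only [← smul_eq_mul (2 * A ^ 2), ← smul_eq_mul (2 * B ^ 2), circleAverage_fun_smul]
    _ ≤ 2 * A ^ 2 * Cg + 2 * B ^ 2 * Ch := by
        gcongr
        exacts [hCg r hr0 hr1, hCh r hr0 hr1]

open Real in
theorem memHardy2_const (c : ℂ) : MemHardy2 fun _ => c :=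
  memHardy2_iff_circleAverage.2
    ⟨differentiableOn_const c, ‖c‖ ^ 2, fun r _ _ => (circleAverage_const _ 0 r).le⟩

theorem MemHardy2.add {f g : ℂ → ℂ} (hf : MemHardy2 f) (hg : MemHardy2 g) :
    MemHardy2 fun z => f z + g z :=
  .of_norm_le (A := 1) (B := 1) (hf.1.add hg.1) hf hg fun z _ => by
    simpa only [one_mul] using norm_add_le (f z) (g z)

theorem MemHardy2.mul_of_norm_le {φ g : ℂ → ℂ} {M : ℝ}
    (hφ : DifferentiableOn ℂ φ (ball 0 1)) (hM : ∀ z ∈ ball (0 : ℂ) 1, ‖φ z‖ ≤ M)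
    (hg : MemHardy2 g) : MemHardy2 fun z => φ z * g z := by
  refine .of_norm_le (A := M) (B := 0) (hφ.mul hg.1) hg hg fun z hz => ?_
  rw [norm_mul, zero_mul, add_zero]
  exact mul_le_mul_of_nonneg_right (hM z hz) (norm_nonneg _)

theorem Polynomial.exists_norm_eval_le_on_ball (q : ℂ[X]) :
    ∃ M : ℝ, ∀ z ∈ ball (0 : ℂ) 1, ‖q.eval z‖ ≤ M := by
  obtain ⟨M, hM⟩ := (isCompact_closedBall (0 : ℂ) 1).exists_bound_of_continuousOn
    q.continuous.continuousOn
  exact ⟨M, fun z hz => hM z (ball_subset_closedBall hz)⟩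

theorem MemHardy2.polynomial_mul (q : ℂ[X]) {g : ℂ → ℂ} (hg : MemHardy2 g) :
    MemHardy2 fun z => q.eval z * g z :=
  have ⟨_, hM⟩ := q.exists_norm_eval_le_on_ball
  hg.mul_of_norm_le q.differentiable.differentiableOn hM

theorem memHardy2_polynomial_eval (q : ℂ[X]) : MemHardy2 fun z => q.eval z := by
  simpa using (memHardy2_const 1).polynomial_mul q

section HbSpace

variable {l : ℕ} {ζ : Fin l → ℂ} {m : Fin l → ℕ}

theorem MemHb.continuousOn {f : ℂ → ℂ} (hf : MemHb ζ m f) : ContinuousOn f (ball 0 1) := by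
  obtain ⟨g, p, hg, -, hfg⟩ := hf
  have hgc := hg.1.continuousOn
  exact ContinuousOn.congr (by fun_prop) hfg

variable (ζ m) in
theorem memHb_of_eqOn {f g : ℂ → ℂ} (hg : MemHardy2 g) (q : ℂ[X])
    (hfg : ∀ z ∈ ball (0 : ℂ) 1, f z = (∏ j, (z - ζ j) ^ m j) * g z + q.eval z) :
    MemHb ζ m f := by
  set P : ℂ[X] := ∏ j, (X - C (ζ j)) ^ m j
  have hP : P.Monic := monic_prod_of_monic _ _ fun j _ => (monic_X_sub_C _).pow _
  have hdegP : P.degree = ((∑ j, m j : ℕ) : WithBot ℕ) := by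
    simp [P, degree_prod, degree_pow, Nat.cast_sum]
  refine ⟨fun z => g z + (q /ₘ P).eval z, q %ₘ P, hg.add (memHardy2_polynomial_eval _),
    hdegP ▸ degree_modByMonic_lt q hP, fun z hz => ?_⟩
  have hdiv := congrArg (eval z) (modByMonic_add_div q P)
  simp only [eval_add, eval_mul, P, eval_prod, eval_pow, eval_sub, eval_X, eval_C] at hdiv
  rw [hfg z hz, ← hdiv]
  ring

variable (ζ m) in
theorem memHb_polynomial_eval (q : ℂ[X]) : MemHb ζ m fun z => q.eval z :=
  memHb_of_eqOn ζ m (memHardy2_const 0) q fun z _ => by simp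

theorem MemHb.add {f f' : ℂ → ℂ} (hf : MemHb ζ m f) (hf' : MemHb ζ m f') :
    MemHb ζ m fun z => f z + f' z := by
  obtain ⟨g, p, hg, -, hfg⟩ := hf
  obtain ⟨g', p', hg', -, hfg'⟩ := hf'
  refine memHb_of_eqOn ζ m (hg.add hg') (p + p') fun z hz => ?_
  rw [hfg z hz, hfg' z hz, eval_add]
  ring

theorem MemHb.polynomial_mul (r : ℂ[X]) {f : ℂ → ℂ} (hf : MemHb ζ m f) :
    MemHb ζ m fun z => r.eval z * f z := by
  obtain ⟨g, p, hg, -, hfg⟩ := hf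
  refine memHb_of_eqOn ζ m (hg.polynomial_mul r) (r * p) fun z hz => ?_
  rw [hfg z hz, eval_mul]
  ring

variable (ζ m) in
def IsHbMultiplier (φ : ℂ → ℂ) : Prop :=
  ∀ f : ℂ → ℂ, MemHb ζ m f → MemHb ζ m fun z => φ z * f z

variable (ζ m) in
theorem isHbMultiplier_polynomial_eval (r : ℂ[X]) : IsHbMultiplier ζ m fun z => r.eval z :=
  fun _ hf => hf.polynomial_mul r

theorem IsHbMultiplier.add {φ ψ : ℂ → ℂ} (hφ : IsHbMultiplier ζ m φ)
    (hψ : IsHbMultiplier ζ m ψ) : IsHbMultiplier ζ m fun z => φ z + ψ z := fun f hf => by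
  simpa only [add_mul] using (hφ f hf).add (hψ f hf)

theorem IsHbMultiplier.mul {φ ψ : ℂ → ℂ} (hφ : IsHbMultiplier ζ m φ)
    (hψ : IsHbMultiplier ζ m ψ) : IsHbMultiplier ζ m fun z => φ z * ψ z := fun f hf => by
  simpa only [mul_assoc] using hφ _ (hψ f hf)

theorem IsHbMultiplier.memHb {φ : ℂ → ℂ} (hφ : IsHbMultiplier ζ m φ) : MemHb ζ m φ := by
  simpa using hφ _ (memHb_polynomial_eval ζ m 1)

end HbSpace

theorem mapClusterPt_atTop_of_mem_closure_range {X : Type*} [TopologicalSpace X] [T1Space X]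
    {u : ℕ → X} {x : X} (hx : x ∈ closure (range u)) (hxu : x ∉ range u) :
    MapClusterPt x atTop u := by
  refine mapClusterPt_atTop_iff_forall_mem_closure.2 fun i => ?_
  have hsplit : range u = u '' Set.Iio i ∪ u '' Ici i := by
    rw [← Set.image_union, Iio_union_Ici, image_univ]
  rw [hsplit, closure_union, ((finite_Iio i).image u).isClosed.closure_eq] at hx
  exact hx.resolve_left fun ⟨n, _, hn⟩ => hxu ⟨n, hn⟩

theorem MultInterp.notMem_closure_range {l : ℕ} {ζ : Fin l → ℂ} {m : Fin l → ℕ} {Λ : ℕ → ℂ}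
    (hΛ : MultInterp ζ m Λ) {w : ℂ} (hw : w ∈ ball (0 : ℂ) 1) (hwΛ : w ∉ range Λ) :
    w ∉ closure (range Λ) := by
  intro hcl
  obtain ⟨ψ, hψ, hlim⟩ := (mapClusterPt_atTop_of_mem_closure_range hcl hwΛ).tendsto_subseq
  obtain ⟨φ, hφ, hφΛ⟩ := hΛ ((range fun k => ψ (2 * k)).indicator 1)
    ⟨1, fun n => (norm_indicator_le_norm_self 1 n).trans (by simp)⟩
  have heven (k : ℕ) : φ (Λ (ψ (2 * k))) = 1 :=
    (hφΛ _).trans (indicator_of_mem (mem_range_self k) _)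
  have hodd (k : ℕ) : φ (Λ (ψ (2 * k + 1))) = 0 :=
    (hφΛ _).trans (indicator_of_notMem (by rintro ⟨j, hj⟩; have := hψ.injective hj; omega) _)
  have hφw : Tendsto (fun k => φ (Λ (ψ k))) atTop (𝓝 (φ w)) :=
    ((IsHbMultiplier.memHb hφ).continuousOn.continuousAt (isOpen_ball.mem_nhds hw)).tendsto.comp
      hlim
  have h1 : φ w = 1 := tendsto_nhds_unique
    ((hφw.comp (StrictMono.tendsto_atTop fun _ _ h => by omega)).congr heven) tendsto_const_nhds
  have h0 : φ w = 0 := tendsto_nhds_unique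
    ((hφw.comp (StrictMono.tendsto_atTop fun _ _ h => by omega)).congr hodd) tendsto_const_nhds
  exact one_ne_zero (h1.symm.trans h0)

theorem statement12_general
    (l : ℕ) (ζ : Fin l → ℂ) (m : Fin l → ℕ)
    -- the sequence: `Λ 0` is the added point, `(Λ (n+1))_n` is the original sequence
    (Λ : ℕ → ℂ) (hΛ : ∀ n, ‖Λ n‖ < 1)
    (hinterp : MultInterp ζ m fun n => Λ (n + 1))
    (hnew : ∀ n : ℕ, Λ 0 ≠ Λ (n + 1)) :
    MultInterp ζ m Λ := by
  rintro v ⟨M, hM⟩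
  have hsep := hinterp.notMem_closure_range (mem_ball_zero_iff.2 (hΛ 0))
    fun ⟨n, hn⟩ => hnew n hn.symm
  rw [Metric.mem_closure_iff] at hsep
  push Not at hsep
  obtain ⟨δ, hδ, hδΛ⟩ := hsep
  have hquot (n : ℕ) : ‖(v (n + 1) - v 0) / (Λ (n + 1) - Λ 0)‖ ≤ 2 * M / δ := by
    rw [norm_div]
    have hΛn : δ ≤ ‖Λ (n + 1) - Λ 0‖ := by
      simpa [dist_eq_norm, norm_sub_rev] using hδΛ _ (mem_range_self n)
    gcongr
    · linarith [norm_nonneg (v 0), hM 0]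
    · linarith [norm_sub_le (v (n + 1)) (v 0), hM (n + 1), hM 0]
  obtain ⟨φ, hφ, hφΛ⟩ := hinterp _ ⟨_, hquot⟩
  refine ⟨fun z => (C (v 0)).eval z + (X - C (Λ 0)).eval z * φ z,
    (isHbMultiplier_polynomial_eval ζ m _).add ((isHbMultiplier_polynomial_eval ζ m _).mul hφ),
    ?_⟩
  rintro (_ | n)
  · simp
  · have hne : Λ (n + 1) - Λ 0 ≠ 0 := sub_ne_zero.2 (hnew n).symm
    simp only [eval_C, eval_sub, eval_X, hφΛ n]
    field_simp
    ring

/-- **Lemma (adding a point).** Let `b` be rational, non-inner, in the closed unit ball of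
`H^∞` with `‖b‖_∞ = 1`, with Pythagorean mate `a` whose circle zeros are `ζ j` with
multiplicities `m j`.  If `(Λ n)_{n ≥ 1}` is multiplier interpolating for `H(b)` and
`Λ 0 ∈ 𝔻` is not one of the `Λ n`, `n ≥ 1`, then the augmented sequence `(Λ n)_{n ≥ 0}` is
multiplier interpolating for `H(b)`. -/
theorem statement12
    (b a : ℂ → ℂ) (l : ℕ) (ζ : Fin l → ℂ) (m : Fin l → ℕ)
    (hζ : ∀ j, ‖ζ j‖ = 1) (hζinj : Function.Injective ζ) (hm : ∀ j, 1 ≤ m j)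
    (hb_rat : ∃ P Q : Polynomial ℂ, (∀ z : ℂ, ‖z‖ ≤ 1 → Q.eval z ≠ 0) ∧
      ∀ z : ℂ, ‖z‖ ≤ 1 → b z = P.eval z / Q.eval z)
    (hb_le : ∀ z : ℂ, ‖z‖ ≤ 1 → ‖b z‖ ≤ 1)
    (hb_norm : ∃ z : ℂ, ‖z‖ = 1 ∧ ‖b z‖ = 1)
    (hb_noninner : ∃ z : ℂ, ‖z‖ = 1 ∧ ‖b z‖ < 1)
    (ha_form : ∃ P Q : Polynomial ℂ, (∀ z : ℂ, ‖z‖ ≤ 1 → P.eval z ≠ 0 ∧ Q.eval z ≠ 0) ∧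
      ∀ z : ℂ, ‖z‖ ≤ 1 → a z = (∏ j, (z - ζ j) ^ m j) * P.eval z / Q.eval z)
    (ha_le : ∀ z : ℂ, ‖z‖ ≤ 1 → ‖a z‖ ≤ 1)
    (ha0 : 0 < (a 0).re ∧ (a 0).im = 0)
    (hab : ∀ z : ℂ, ‖z‖ = 1 → ‖a z‖ ^ 2 + ‖b z‖ ^ 2 = 1)
    -- the sequence: `Λ 0` is the added point, `(Λ (n+1))_n` is the original sequence
    (Λ : ℕ → ℂ) (hΛ : ∀ n, ‖Λ n‖ < 1)
    (hinterp : MultInterp ζ m fun n => Λ (n + 1))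
    (hnew : ∀ n : ℕ, Λ 0 ≠ Λ (n + 1)) :
    MultInterp ζ m Λ :=
  statement12_general l ζ m Λ hΛ hinterp hnew
end
end

section
/- Let ζ ∈ 𝕋, let M ≥ 1 be an integer, and let Λ(ω) = (r_n e^{iϑ_n(ω)})_{n∈ℕ} be a random sequence with fixed radii 0 ≤ r_n < 1 and (ϑ_n) independent uniform on [0,2π]. Then the probability of the event { Σ_{n∈ℕ} (1−r_n²)/|ζ−λ_n(ω)|^{2M} < ∞ } equals 1 if Σ_{n∈ℕ} (1−r_n²)^{1/(2M)} < ∞, and equals 0 otherwise. -/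
open Complex MeasureTheory Set Filter ProbabilityTheory
open scoped ENNReal Real

/-!
Write `1 - r_n ^ 2 = δ_n ^ (2M)` and let `d_n ∈ [0, π]` be the angular distance from `θ_n` to
`arg ζ`, so that `|ζ - λ_n|² = 1 + r_n² - 2 r_n cos d_n`. This is at least `d_n² / π²`, and at
most `δ_n²` when `d_n ≤ δ_n`. Hence the `n`-th term is `≥ 1` on the event `d_n ≤ δ_n`, of
probability `δ_n / π`, and is `≤ (π δ_n / d_n)²` when `d_n > π δ_n`; summing over dyadic shells
of `d_n` gives `𝔼 min(term, 1) ≤ 8 δ_n`.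

If `∑ δ_n < ∞`, then `∑ min(term, 1)` has finite expectation, so it is finite a.s., and then the
terms are eventually `< 1` and the series itself converges. If `∑ δ_n = ∞`, the independent
events `d_n ≤ δ_n` happen infinitely often a.s. by the second Borel–Cantelli lemma.
-/

instance fact_two_pi_pos : Fact (0 < 2 * π) := ⟨Real.two_pi_pos⟩

theorem norm_exp_mul_I_sub_mul_exp_mul_I_sq (a r x : ℝ) :
    ‖exp (a * I) - r * exp (x * I)‖ ^ 2 = 1 + r ^ 2 - 2 * r * Real.cos (x - a) := by
  rw [exp_mul_I, exp_mul_I]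
  have h : Complex.cos a + Complex.sin a * I - r * (Complex.cos x + Complex.sin x * I)
      = ((Real.cos a - r * Real.cos x : ℝ) : ℂ) + ((Real.sin a - r * Real.sin x : ℝ) : ℂ) * I := by
    push_cast [← ofReal_cos, ← ofReal_sin]
    ring
  rw [h, Complex.sq_norm, normSq_add_mul_I]
  linear_combination Real.sin_sq_add_cos_sq a + r ^ 2 * Real.sin_sq_add_cos_sq x
    + 2 * r * Real.cos_sub x a

theorem cos_dist_coe_addCircle (x a : ℝ) :
    Real.cos (dist (x : AddCircle (2 * π)) (a : AddCircle (2 * π))) = Real.cos (x - a) := by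
  rw [dist_eq_norm, ← AddCircle.coe_sub, AddCircle.norm_eq, Real.cos_abs,
    Real.cos_sub_int_mul_two_pi]

theorem dist_addCircle_two_pi_le (x y : AddCircle (2 * π)) : dist x y ≤ π := by
  have h := AddCircle.norm_le_half_period (2 * π) (x := x - y) (by positivity)
  rwa [abs_of_pos (by positivity), mul_div_cancel_left₀ _ two_ne_zero, ← dist_eq_norm] at h

theorem norm_sub_mul_exp_mul_I_sq {ζ : ℂ} (hζ : ‖ζ‖ = 1) (r x : ℝ) :
    ‖ζ - r * exp (x * I)‖ ^ 2 =
      1 + r ^ 2 - 2 * r * Real.cos (dist (x : AddCircle (2 * π)) (ζ.arg : AddCircle (2 * π))) := by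
  have hζ' : ζ = exp (ζ.arg * I) := by
    simpa [hζ] using (norm_mul_exp_arg_mul_I ζ).symm
  rw [cos_dist_coe_addCircle, ← norm_exp_mul_I_sub_mul_exp_mul_I_sq, ← hζ']

theorem one_add_sq_sub_mul_cos_pos {r : ℝ} (hr0 : 0 ≤ r) (hr1 : r < 1) (d : ℝ) :
    0 < 1 + r ^ 2 - 2 * r * Real.cos d := by
  nlinarith [Real.cos_le_one d]

theorem sq_div_pi_sq_le_one_add_sq_sub_mul_cos {r d : ℝ} (hr0 : 0 ≤ r)
    (hd : |d| ≤ π) : d ^ 2 / π ^ 2 ≤ 1 + r ^ 2 - 2 * r * Real.cos d := by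
  have hcos := Real.cos_le_one_sub_mul_cos_sq hd
  have hs : d ^ 2 / π ^ 2 ≤ 1 := by
    rw [div_le_one (by positivity), sq_le_sq, abs_of_pos Real.pi_pos]
    exact hd
  have hs0 : 0 ≤ d ^ 2 / π ^ 2 := by positivity
  have : 2 / π ^ 2 * d ^ 2 = 2 * (d ^ 2 / π ^ 2) := by ring
  nlinarith [mul_le_mul_of_nonneg_left hcos (by positivity : (0:ℝ) ≤ 2 * r),
    mul_nonneg (sq_nonneg (1 - r)) (sub_nonneg.2 hs),
    mul_nonneg hs0 (by positivity : 0 ≤ r * (r + 2))]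

theorem one_add_sq_sub_mul_cos_le {r d s : ℝ} (hr0 : 0 ≤ r) (hr1 : r ≤ 1) (hs : 1 - r ≤ s)
    (hd : d ^ 2 ≤ s) : 1 + r ^ 2 - 2 * r * Real.cos d ≤ s := by
  nlinarith [Real.one_sub_sq_div_two_le_cos (x := d)]

section Summand

variable {ζ : ℂ} {M : ℕ} {r δ x : ℝ}

theorem one_le_div_norm_sub_mul_exp_mul_I_pow (hζ : ‖ζ‖ = 1) (hM : 1 ≤ M) (hr0 : 0 ≤ r)
    (hr1 : r < 1) (hδ0 : 0 ≤ δ) (hδ : δ ^ (2 * M) = 1 - r ^ 2)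
    (hx : dist (x : AddCircle (2 * π)) (ζ.arg : AddCircle (2 * π)) ≤ δ) :
    1 ≤ (1 - r ^ 2) / ‖ζ - r * exp (x * I)‖ ^ (2 * M) := by
  have hδ1 : δ ≤ 1 :=
    (pow_le_one_iff_of_nonneg hδ0 (n := 2 * M) (by omega)).1 (by rw [hδ]; nlinarith)
  have hr : 1 - r ≤ δ ^ 2 := calc
    1 - r ≤ 1 - r ^ 2 := by nlinarith
    _ = δ ^ (2 * M) := hδ.symm
    _ ≤ δ ^ 2 := pow_le_pow_of_le_one hδ0 hδ1 (by omega)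
  have hq := one_add_sq_sub_mul_cos_pos hr0 hr1
    (dist (x : AddCircle (2 * π)) (ζ.arg : AddCircle (2 * π)))
  rw [pow_mul, norm_sub_mul_exp_mul_I_sq hζ, one_le_div (pow_pos hq M), ← hδ, pow_mul]
  exact pow_le_pow_left₀ hq.le (one_add_sq_sub_mul_cos_le hr0 hr1.le hr
    (pow_le_pow_left₀ dist_nonneg hx 2)) M

theorem div_norm_sub_mul_exp_mul_I_pow_le (hζ : ‖ζ‖ = 1) (hM : 1 ≤ M) (hr0 : 0 ≤ r)
    (hδ0 : 0 ≤ δ) (hδ : δ ^ (2 * M) = 1 - r ^ 2)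
    (hx : π * δ < dist (x : AddCircle (2 * π)) (ζ.arg : AddCircle (2 * π))) :
    (1 - r ^ 2) / ‖ζ - r * exp (x * I)‖ ^ (2 * M) ≤
      (π * δ / dist (x : AddCircle (2 * π)) (ζ.arg : AddCircle (2 * π))) ^ 2 := by
  set d := dist (x : AddCircle (2 * π)) (ζ.arg : AddCircle (2 * π))
  have hd0 : 0 < d := lt_of_le_of_lt (by positivity) hx
  have hdπ : |d| ≤ π := (abs_of_pos hd0).trans_le (dist_addCircle_two_pi_le _ _)
  have hq := sq_div_pi_sq_le_one_add_sq_sub_mul_cos hr0 hdπ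
  have hratio : π * δ / d < 1 := (div_lt_one hd0).2 hx
  calc (1 - r ^ 2) / ‖ζ - r * exp (x * I)‖ ^ (2 * M)
      = δ ^ (2 * M) / (1 + r ^ 2 - 2 * r * Real.cos d) ^ M := by
        rw [pow_mul, norm_sub_mul_exp_mul_I_sq hζ, hδ]
    _ ≤ δ ^ (2 * M) / (d ^ 2 / π ^ 2) ^ M := by
        gcongr
    _ = (π * δ / d) ^ (2 * M) := by
        rw [pow_mul, pow_mul, ← div_pow]
        congr 1
        field_simp
    _ ≤ (π * δ / d) ^ 2 := pow_le_pow_of_le_one (by positivity) hratio.le (by omega)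

end Summand

section UniformAngle

variable {Ω : Type*} [MeasurableSpace Ω] {μ : Measure Ω} {T : ℝ} [Fact (0 < T)] {X : Ω → ℝ}

theorem map_coe_addCircle_of_map_eq (hX : Measurable X)
    (hunif : μ.map X = (ENNReal.ofReal T)⁻¹ • volume.restrict (Icc 0 T)) :
    μ.map (fun ω => (X ω : AddCircle T)) = (ENNReal.ofReal T)⁻¹ • volume := by
  have hIcc : volume.restrict (Icc 0 T) = volume.restrict (Ioc 0 (0 + T)) := by
    rw [zero_add, restrict_Ioc_eq_restrict_Icc]
  change μ.map (((↑) : ℝ → AddCircle T) ∘ X) = _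
  rw [← Measure.map_map AddCircle.measurable_mk' hX, hunif, Measure.map_smul, hIcc,
    (AddCircle.measurePreserving_mk T 0).map_eq]

theorem measure_dist_coe_addCircle_le_eq (hX : Measurable X)
    (hunif : μ.map X = (ENNReal.ofReal T)⁻¹ • volume.restrict (Icc 0 T)) (β : AddCircle T)
    (t : ℝ) : μ {ω | dist (X ω : AddCircle T) β ≤ t} = ENNReal.ofReal (min T (2 * t) / T) := by
  have hT := (Fact.out : 0 < T)
  have hmeas : Measurable fun ω => (X ω : AddCircle T) := AddCircle.measurable_mk'.comp hX
  change μ ((fun ω => (X ω : AddCircle T)) ⁻¹' Metric.closedBall β t) = _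
  rw [← Measure.map_apply hmeas Metric.isClosed_closedBall.measurableSet,
    map_coe_addCircle_of_map_eq hX hunif, Measure.smul_apply, AddCircle.volume_closedBall,
    smul_eq_mul, ← ENNReal.ofReal_inv_of_pos hT, ← ENNReal.ofReal_mul (by positivity),
    inv_mul_eq_div]

theorem measure_dist_coe_addCircle_le_le_two_mul_div (hX : Measurable X)
    (hunif : μ.map X = (ENNReal.ofReal T)⁻¹ • volume.restrict (Icc 0 T)) (β : AddCircle T)
    (t : ℝ) : μ {ω | dist (X ω : AddCircle T) β ≤ t} ≤ ENNReal.ofReal (2 * t / T) := by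
  rw [measure_dist_coe_addCircle_le_eq hX hunif]
  gcongr
  · exact (Fact.out : 0 < T).le
  · exact min_le_right _ _

theorem measure_dist_coe_addCircle_le_of_two_mul_le (hX : Measurable X)
    (hunif : μ.map X = (ENNReal.ofReal T)⁻¹ • volume.restrict (Icc 0 T)) (β : AddCircle T)
    {t : ℝ} (ht : 2 * t ≤ T) :
    μ {ω | dist (X ω : AddCircle T) β ≤ t} = ENNReal.ofReal (2 * t / T) := by
  rw [measure_dist_coe_addCircle_le_eq hX hunif, min_eq_right ht]

end UniformAngle

theorem lintegral_le_of_le_sq_div {Ω : Type*} [MeasurableSpace Ω] {μ : Measure Ω} {D : Ω → ℝ}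
    (hD : Measurable D) {K a : ℝ} (hK : 0 ≤ K) (ha : 0 < a)
    (hball : ∀ t, 0 < t → μ {ω | D ω ≤ t} ≤ ENNReal.ofReal (K * t)) {Z : Ω → ℝ≥0∞}
    (hZ1 : ∀ ω, Z ω ≤ 1) (hZ : ∀ ω, a < D ω → Z ω ≤ ENNReal.ofReal ((a / D ω) ^ 2)) :
    ∫⁻ ω, Z ω ∂μ ≤ ENNReal.ofReal (8 * K * a) := by
  set c : ℕ → ℝ := fun k => 4 * (1 / 4) ^ k
  set B : ℕ → Set Ω := fun k => {ω | D ω ≤ 2 ^ k * a}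
  have hB : ∀ k, MeasurableSet (B k) := fun k => hD measurableSet_Iic
  -- `k` is the index of the dyadic shell `2 ^ (k - 1) * a < D ω ≤ 2 ^ k * a`
  have hshell : ∀ ω, ∃ k, ω ∈ B k ∧ Z ω ≤ ENNReal.ofReal (c k) := by
    intro ω
    rcases le_or_gt (D ω) a with hDa | hDa
    · refine ⟨0, by simpa [B] using hDa, (hZ1 ω).trans ?_⟩
      simp [c]
    · obtain ⟨n, hn, hn'⟩ := exists_nat_pow_near ((one_le_div ha).2 hDa.le) one_lt_two
      have hD0 : 0 < D ω := ha.trans hDa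
      refine ⟨n + 1, ((div_le_iff₀ ha).1 hn'.le), (hZ ω hDa).trans (ENNReal.ofReal_le_ofReal ?_)⟩
      have hle : a / D ω ≤ (1 / 2) ^ n := calc
        a / D ω = (D ω / a)⁻¹ := (inv_div _ _).symm
        _ ≤ (2 ^ n)⁻¹ := inv_anti₀ (by positivity) hn
        _ = (1 / 2) ^ n := by rw [one_div_pow, one_div]
      calc (a / D ω) ^ 2 ≤ ((1 / 2) ^ n) ^ 2 := pow_le_pow_left₀ (by positivity) hle 2
        _ = c (n + 1) := by simp only [c]; rw [← pow_mul, pow_succ, pow_mul']; norm_num; ring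
  have hpt : ∀ ω, Z ω ≤ ∑' k, (B k).indicator (fun _ => ENNReal.ofReal (c k)) ω := by
    intro ω
    obtain ⟨k, hk, hZk⟩ := hshell ω
    calc Z ω ≤ ENNReal.ofReal (c k) := hZk
      _ = (B k).indicator (fun _ => ENNReal.ofReal (c k)) ω :=
        (indicator_of_mem (f := fun _ => ENNReal.ofReal (c k)) hk).symm
      _ ≤ _ := ENNReal.le_tsum k
  have hgeom : ∀ k : ℕ, c k * (K * (2 ^ k * a)) = 4 * K * a * (1 / 2) ^ k := by
    intro k
    simp only [c]
    rw [show (1 / 2 : ℝ) ^ k = (1 / 4) ^ k * 2 ^ k by rw [← mul_pow]; norm_num]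
    ring
  calc ∫⁻ ω, Z ω ∂μ
      ≤ ∫⁻ ω, ∑' k, (B k).indicator (fun _ => ENNReal.ofReal (c k)) ω ∂μ := lintegral_mono hpt
    _ = ∑' k, ENNReal.ofReal (c k) * μ (B k) := by
        rw [lintegral_tsum fun k => (measurable_const.indicator (hB k)).aemeasurable]
        simp_rw [lintegral_indicator_const (hB _)]
    _ ≤ ∑' k, ENNReal.ofReal (c k) * ENNReal.ofReal (K * (2 ^ k * a)) := by
        gcongr with k
        exact hball _ (by positivity)
    _ = ∑' k, ENNReal.ofReal (4 * K * a * (1 / 2) ^ k) := by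
        simp_rw [← ENNReal.ofReal_mul (by positivity : (0 : ℝ) ≤ c _), hgeom]
    _ = ENNReal.ofReal (8 * K * a) := by
        rw [← ENNReal.ofReal_tsum_of_nonneg (fun k => by positivity)
          ((summable_geometric_two).mul_left _), tsum_mul_left, tsum_geometric_two]
        ring_nf

theorem lintegral_min_div_norm_sub_mul_exp_mul_I_pow_le {Ω : Type*} [MeasurableSpace Ω]
    {μ : Measure Ω} {X : Ω → ℝ} (hX : Measurable X)
    (hunif : μ.map X = (ENNReal.ofReal (2 * π))⁻¹ • volume.restrict (Icc 0 (2 * π)))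
    {ζ : ℂ} (hζ : ‖ζ‖ = 1) {M : ℕ} (hM : 1 ≤ M) {r δ : ℝ} (hr0 : 0 ≤ r) (hδ0 : 0 < δ)
    (hδ : δ ^ (2 * M) = 1 - r ^ 2) :
    ∫⁻ ω, ENNReal.ofReal (min ((1 - r ^ 2) / ‖ζ - r * exp (X ω * I)‖ ^ (2 * M)) 1) ∂μ ≤
      ENNReal.ofReal (8 * δ) := by
  have hD : Measurable fun ω => dist (X ω : AddCircle (2 * π)) (ζ.arg : AddCircle (2 * π)) :=
    ((AddCircle.continuous_mk' _).dist continuous_const).measurable.comp hX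
  have h := lintegral_le_of_le_sq_div hD (K := 2 / (2 * π)) (a := π * δ) (by positivity)
    (by positivity)
    (fun t _ => (measure_dist_coe_addCircle_le_le_two_mul_div hX hunif _ t).trans_eq (by ring_nf))
    (fun ω => ENNReal.ofReal_le_one.2 (min_le_right _ _))
    (fun ω hω => ENNReal.ofReal_le_ofReal ((min_le_left _ _).trans
      (div_norm_sub_mul_exp_mul_I_pow_le hζ hM hr0 hδ0.le hδ hω)))
  rwa [show 8 * (2 / (2 * π)) * (π * δ) = 8 * δ by field_simp] at h

theorem summable_of_tsum_ofReal_ne_top {ι : Type*} {g : ι → ℝ} (hg : ∀ i, 0 ≤ g i)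
    (h : ∑' i, ENNReal.ofReal (g i) ≠ ∞) : Summable g :=
  (ENNReal.summable_toReal h).congr fun i => ENNReal.toReal_ofReal (hg i)

theorem summable_of_summable_min_one {ι : Type*} {g : ι → ℝ} (hg : ∀ i, 0 ≤ g i)
    (h : Summable fun i => min (g i) 1) : Summable g := by
  refine h.of_norm_bounded_eventually ?_
  filter_upwards [h.tendsto_cofinite_zero.eventually_lt_const one_pos] with i hi
  rw [Real.norm_of_nonneg (hg i), min_eq_left (min_lt_iff.1 hi |>.resolve_right (lt_irrefl 1)).le]

section

variable {Ω : Type*} [MeasurableSpace Ω] {μ : Measure Ω} {f : ℕ → Ω → ℝ}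

theorem ae_summable_of_tsum_lintegral_min_one_ne_top (hf : ∀ n, Measurable (f n))
    (hf0 : ∀ n ω, 0 ≤ f n ω) (h : ∑' n, ∫⁻ ω, ENNReal.ofReal (min (f n ω) 1) ∂μ ≠ ∞) :
    ∀ᵐ ω ∂μ, Summable fun n => f n ω := by
  have hmeas : ∀ n, Measurable fun ω => ENNReal.ofReal (min (f n ω) 1) := fun n => by
    fun_prop
  have hfin : ∀ᵐ ω ∂μ, ∑' n, ENNReal.ofReal (min (f n ω) 1) < ∞ := by
    refine ae_lt_top (Measurable.tsum hmeas) ?_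
    rwa [lintegral_tsum fun n => (hmeas n).aemeasurable]
  filter_upwards [hfin] with ω hω
  exact summable_of_summable_min_one (hf0 · ω)
    (summable_of_tsum_ofReal_ne_top (fun n => le_min (hf0 n ω) zero_le_one) hω.ne)

theorem ProbabilityTheory.iIndepFun.iIndepSet_preimage {ι β : Type*} [MeasurableSpace β]
    {X : ι → Ω → β} (hX : iIndepFun X μ) (hXm : ∀ n, Measurable (X n)) {S : ι → Set β}
    (hS : ∀ n, MeasurableSet (S n)) : iIndepSet (fun n => X n ⁻¹' S n) μ := by
  rw [iIndepSet_iff_meas_biInter fun n => hXm n (hS n)]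
  exact fun s => hX.meas_biInter fun n _ => ⟨S n, hS n, rfl⟩

theorem ae_not_summable_of_iIndepSet [IsProbabilityMeasure μ] {A : ℕ → Set Ω}
    (hA : ∀ n, MeasurableSet (A n)) (hindep : iIndepSet A μ) (hsum : ∑' n, μ (A n) = ∞)
    (hf : ∀ n, ∀ ω ∈ A n, 1 ≤ f n ω) : ∀ᵐ ω ∂μ, ¬ Summable fun n => f n ω := by
  have hlimsup : ∀ᵐ ω ∂μ, ω ∈ limsup A atTop := by
    rw [ae_iff, ← compl_ofPred, ofPred_mem_eq,
      prob_compl_eq_zero_iff (MeasurableSet.measurableSet_limsup hA)]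
    exact measure_limsup_eq_one hA hindep hsum
  filter_upwards [hlimsup] with ω hω hsummable
  obtain ⟨n, hn, hlt⟩ := ((mem_limsup_iff_frequently_mem.1 hω).and_eventually
    (hsummable.tendsto_atTop_zero.eventually_lt_const one_pos)).exists
  exact (hf n ω hn).not_gt hlt

end

section RandomSequence

variable {Ω : Type*} [MeasurableSpace Ω] {μ : Measure Ω} {θ : ℕ → Ω → ℝ} {r δ : ℕ → ℝ} {ζ : ℂ}
  {M : ℕ}

theorem measure_setOf_summable_eq_one [IsProbabilityMeasure μ] (hmeas : ∀ n, Measurable (θ n))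
    (hunif : ∀ n, μ.map (θ n) =
      (ENNReal.ofReal (2 * π))⁻¹ • volume.restrict (Icc 0 (2 * π)))
    (hr : ∀ n, 0 ≤ r n) (hζ : ‖ζ‖ = 1) (hM : 1 ≤ M) (hδ0 : ∀ n, 0 < δ n)
    (hδ : ∀ n, δ n ^ (2 * M) = 1 - r n ^ 2) (hsum : Summable δ) :
    μ {ω | Summable fun n => (1 - r n ^ 2) / ‖ζ - r n * exp (θ n ω * I)‖ ^ (2 * M)} = 1 := by
  have hae := ae_summable_of_tsum_lintegral_min_one_ne_top (μ := μ) (fun n => by fun_prop)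
    (fun n ω => div_nonneg (hδ n ▸ pow_nonneg (hδ0 n).le _) (by positivity))
    (ne_top_of_le_ne_top (hsum.mul_left 8).tsum_ofReal_ne_top (ENNReal.tsum_le_tsum fun n =>
      lintegral_min_div_norm_sub_mul_exp_mul_I_pow_le (hmeas n) (hunif n) hζ hM (hr n)
        (hδ0 n) (hδ n)))
  exact (measure_congr (ae_eq_univ.2 (ae_iff.1 hae))).trans measure_univ

theorem measure_setOf_summable_eq_zero [IsProbabilityMeasure μ] (hmeas : ∀ n, Measurable (θ n))
    (hindep : iIndepFun θ μ)
    (hunif : ∀ n, μ.map (θ n) =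
      (ENNReal.ofReal (2 * π))⁻¹ • volume.restrict (Icc 0 (2 * π)))
    (hr : ∀ n, 0 ≤ r n ∧ r n < 1) (hζ : ‖ζ‖ = 1) (hM : 1 ≤ M) (hδ0 : ∀ n, 0 < δ n)
    (hδ : ∀ n, δ n ^ (2 * M) = 1 - r n ^ 2) (hsum : ¬ Summable δ) :
    μ {ω | Summable fun n => (1 - r n ^ 2) / ‖ζ - r n * exp (θ n ω * I)‖ ^ (2 * M)} = 0 := by
  have hS : ∀ n, MeasurableSet {x : ℝ | dist (x : AddCircle (2 * π)) ζ.arg ≤ δ n} := fun n =>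
    measurableSet_le ((AddCircle.continuous_mk' _).dist continuous_const).measurable
      measurable_const
  have hμ : ∀ n, μ (θ n ⁻¹' {x : ℝ | dist (x : AddCircle (2 * π)) ζ.arg ≤ δ n}) =
      ENNReal.ofReal (δ n / π) := fun n => by
    have hδ1 : δ n ≤ 1 :=
      (pow_le_one_iff_of_nonneg (hδ0 n).le (n := 2 * M) (by omega)).1 (by nlinarith [hδ n])
    rw [← mul_div_mul_left (δ n) π two_ne_zero]
    exact measure_dist_coe_addCircle_le_of_two_mul_le (hmeas n) (hunif n) _
      (by nlinarith [Real.pi_gt_three])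
  have htop : ∑' n, μ (θ n ⁻¹' {x : ℝ | dist (x : AddCircle (2 * π)) ζ.arg ≤ δ n}) = ∞ := by
    simp_rw [hμ]
    by_contra h
    exact hsum ((summable_div_const_iff Real.pi_pos.ne').1
      (summable_of_tsum_ofReal_ne_top (fun n => div_nonneg (hδ0 n).le Real.pi_pos.le) h))
  have hae := ae_not_summable_of_iIndepSet (fun n => hmeas n (hS n))
    (hindep.iIndepSet_preimage hmeas hS) htop fun n ω hω =>
      one_le_div_norm_sub_mul_exp_mul_I_pow hζ hM (hr n).1 (hr n).2 (hδ0 n).le (hδ n) hω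
  simpa using ae_iff.1 hae

end RandomSequence

theorem rpow_one_div_two_mul_pow {x : ℝ} (hx : 0 ≤ x) {M : ℕ} (hM : M ≠ 0) :
    (x ^ ((1 : ℝ) / (2 * M))) ^ (2 * M) = x := by
  rw [show (1 : ℝ) / (2 * M) = ((2 * M : ℕ) : ℝ)⁻¹ by push_cast; rw [one_div]]
  exact Real.rpow_inv_natCast_pow hx (by omega)

/-- **Lemma (random 0-1 law for the Ahern-Clark type sums).** Let `ζ ∈ 𝕋`, `M ≥ 1`, and let
`λ n(ω) = r n · e^{i θ n ω}` be a random sequence with fixed radii `0 ≤ r n < 1` and `(θ n)`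
independent, uniform on `[0,2π]`.  Then
`P( ∑_n (1-r n²)/|ζ - λ n|^{2M} < ∞ ) = 1` if `∑_n (1-r n²)^{1/(2M)} < ∞`, and `= 0`
otherwise. -/
theorem statement14
    {Ω : Type*} [MeasurableSpace Ω] (μ : Measure Ω) [IsProbabilityMeasure μ]
    (θ : ℕ → Ω → ℝ) (hmeas : ∀ n, Measurable (θ n))
    (hindep : iIndepFun θ μ)
    (hunif : ∀ n, Measure.map (θ n) μ =
      (ENNReal.ofReal (2 * Real.pi))⁻¹ • volume.restrict (Set.Icc (0 : ℝ) (2 * Real.pi)))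
    (r : ℕ → ℝ) (hr : ∀ n, 0 ≤ r n ∧ r n < 1)
    (ζ : ℂ) (hζ : ‖ζ‖ = 1) (M : ℕ) (hM : 1 ≤ M) :
    (Summable (fun n => (1 - r n ^ 2) ^ ((1 : ℝ) / (2 * M))) →
      μ {ω | Summable fun n =>
        (1 - r n ^ 2) / ‖ζ - (r n : ℂ) * Complex.exp ((θ n ω : ℂ) * Complex.I)‖ ^ (2 * M)} = 1) ∧
    (¬ Summable (fun n => (1 - r n ^ 2) ^ ((1 : ℝ) / (2 * M))) →
      μ {ω | Summable fun n =>
        (1 - r n ^ 2) / ‖ζ - (r n : ℂ) * Complex.exp ((θ n ω : ℂ) * Complex.I)‖ ^ (2 * M)} = 0) := by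
  have hε : ∀ n, 0 < 1 - r n ^ 2 := fun n => by nlinarith [hr n]
  have hδ0 : ∀ n, 0 < (1 - r n ^ 2) ^ ((1 : ℝ) / (2 * M)) := fun n =>
    Real.rpow_pos_of_pos (hε n) _
  have hδ : ∀ n, ((1 - r n ^ 2) ^ ((1 : ℝ) / (2 * M))) ^ (2 * M) = 1 - r n ^ 2 := fun n =>
    rpow_one_div_two_mul_pow (hε n).le (by omega)
  exact ⟨measure_setOf_summable_eq_one hmeas hunif (fun n => (hr n).1) hζ hM hδ0 hδ,
    measure_setOf_summable_eq_zero hmeas hindep hunif hr hζ hM hδ0 hδ⟩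
end

section
/- Let M ≥ 1 be an integer, r ∈ (0,1), and let ϑ be a random variable uniformly distributed on [0,2π]. Then the probability that (1−r²)/|1−re^{iϑ}|^{2M} > 1 equals arccos(u_r)/π, where u_r = (1 + r² − (1−r²)^{1/M})/(2r); the number u_r always lies in [−1,1] for r ∈ (0,1). -/
open Complex MeasureTheory Set
open scoped ENNReal

noncomputable section

/-!
Since `|1 - r e^{iϑ}|² = 1 + r² - 2r cos ϑ`, the event `(1 - r²)/|1 - r e^{iϑ}|^{2M} > 1` is
`1 + r² - 2r cos ϑ < (1 - r²)^{1/M}`, i.e. `cos ϑ > u_r`. On `[0, 2π]` this is the union of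
`[0, arccos u_r)` and its mirror image `(2π - arccos u_r, 2π]`, of total length `2 arccos u_r`.
The bounds `(1 - r)² ≤ 1 - r² ≤ (1 - r²)^{1/M} ≤ 1 ≤ (1 + r)²` place `u_r` in `[-1, 1]`.
-/

open scoped Real

lemma norm_one_sub_ofReal_mul_exp_sq (r t : ℝ) :
    ‖(1 : ℂ) - (r : ℂ) * exp ((t : ℂ) * I)‖ ^ 2 = 1 + r ^ 2 - 2 * r * Real.cos t := by
  rw [Complex.sq_norm, normSq_apply]
  simp only [sub_re, one_re, re_ofReal_mul, exp_ofReal_mul_I_re, sub_im, one_im,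
    im_ofReal_mul, exp_ofReal_mul_I_im]
  nlinarith [Real.sin_sq_add_cos_sq t]

lemma one_lt_div_pow_iff_lt_rpow {c w : ℝ} {M : ℕ} (hc : 0 < c) (hw : 0 < w) (hM : M ≠ 0) :
    1 < c / w ^ M ↔ w < c ^ ((1 : ℝ) / M) := by
  have hroot : (c ^ ((1 : ℝ) / M)) ^ M = c := by
    rw [one_div, Real.rpow_inv_natCast_pow hc.le hM]
  rw [one_lt_div (by positivity), ← hroot,
    pow_lt_pow_iff_left₀ hw.le (by positivity) hM, hroot]

lemma one_add_sq_sub_div_two_mul_mem_Icc {r v : ℝ} (hr : 0 < r)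
    (hv : v ∈ Icc ((1 - r) ^ 2) ((1 + r) ^ 2)) : (1 + r ^ 2 - v) / (2 * r) ∈ Icc (-1) 1 := by
  obtain ⟨hlow, hup⟩ := hv
  constructor
  · rw [le_div_iff₀ (by positivity)]
    nlinarith
  · rw [div_le_one (by positivity)]
    nlinarith

lemma one_sub_sq_rpow_mem_Icc {r : ℝ} {M : ℕ} (hr0 : 0 < r) (hr1 : r < 1) (hM : 1 ≤ M) :
    (1 - r ^ 2) ^ ((1 : ℝ) / M) ∈ Icc ((1 - r) ^ 2) ((1 + r) ^ 2) := by
  have hx0 : 0 ≤ 1 - r ^ 2 := by nlinarith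
  have hx1 : 1 - r ^ 2 ≤ 1 := by nlinarith
  have hexp : (1 : ℝ) / M ≤ 1 := by
    rw [div_le_one (by positivity)]
    exact_mod_cast hM
  constructor
  · calc (1 - r) ^ 2 ≤ 1 - r ^ 2 := by nlinarith
      _ ≤ _ := Real.self_le_rpow_of_le_one hx0 hx1 hexp
  · calc (1 - r ^ 2) ^ ((1 : ℝ) / M) ≤ 1 := Real.rpow_le_one hx0 hx1 (by positivity)
      _ ≤ (1 + r) ^ 2 := by nlinarith

lemma lt_cos_iff_lt_arccos {u t : ℝ} (hu : u ∈ Icc (-1) 1) (ht : t ∈ Icc 0 π) :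
    u < Real.cos t ↔ t < Real.arccos u := by
  conv_lhs => rw [← Real.cos_arccos hu.1 hu.2]
  exact Real.strictAntiOn_cos.lt_iff_gt ⟨Real.arccos_nonneg u, Real.arccos_le_pi u⟩ ht

lemma lt_cos_iff_of_mem_Icc_zero_two_pi {u t : ℝ} (hu : u ∈ Icc (-1) 1)
    (ht : t ∈ Icc 0 (2 * π)) :
    u < Real.cos t ↔ t < Real.arccos u ∨ 2 * π - Real.arccos u < t := by
  have ha := Real.arccos_le_pi u
  rcases le_total t π with htπ | hπt
  · rw [lt_cos_iff_lt_arccos hu ⟨ht.1, htπ⟩]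
    constructor
    · exact Or.inl
    · rintro (h | h) <;> linarith
  · have hmirror : Real.cos t = Real.cos (2 * π - t) := by
      rw [Real.cos_two_pi_sub]
    rw [hmirror, lt_cos_iff_lt_arccos hu ⟨by linarith [ht.2], by linarith⟩]
    constructor
    · intro h
      exact Or.inr (by linarith)
    · rintro (h | h) <;> linarith

lemma setOf_lt_cos_eq_union {u : ℝ} (hu : u ∈ Icc (-1) 1) :
    {t | t ∈ Icc 0 (2 * π) ∧ u < Real.cos t} =
      Ico 0 (Real.arccos u) ∪ Ioc (2 * π - Real.arccos u) (2 * π) := by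
  have ha := Real.arccos_le_pi u
  ext t
  simp only [mem_ofPred_eq, mem_union, mem_Ico, mem_Ioc]
  constructor
  · rintro ⟨ht, hcos⟩
    rcases (lt_cos_iff_of_mem_Icc_zero_two_pi hu ht).1 hcos with h | h
    · exact Or.inl ⟨ht.1, h⟩
    · exact Or.inr ⟨h, ht.2⟩
  · rintro (⟨h0, h⟩ | ⟨h, h2⟩)
    · have ht : t ∈ Icc 0 (2 * π) := ⟨h0, by linarith [Real.pi_pos]⟩
      exact ⟨ht, (lt_cos_iff_of_mem_Icc_zero_two_pi hu ht).2 (Or.inl h)⟩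
    · have ht : t ∈ Icc 0 (2 * π) := ⟨by linarith, h2⟩
      exact ⟨ht, (lt_cos_iff_of_mem_Icc_zero_two_pi hu ht).2 (Or.inr h)⟩

lemma volume_setOf_lt_cos {u : ℝ} (hu : u ∈ Icc (-1) 1) :
    volume {t | t ∈ Icc 0 (2 * π) ∧ u < Real.cos t} = ENNReal.ofReal (2 * Real.arccos u) := by
  have ha := Real.arccos_nonneg u
  have hdisj : Disjoint (Ico 0 (Real.arccos u)) (Ioc (2 * π - Real.arccos u) (2 * π)) := by
    rw [disjoint_left]
    rintro x ⟨-, hx⟩ ⟨hx', -⟩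
    linarith [Real.arccos_le_pi u]
  rw [setOf_lt_cos_eq_union hu, measure_union hdisj measurableSet_Ioc, Real.volume_Ico,
    Real.volume_Ioc, sub_sub_cancel, sub_zero, ← ENNReal.ofReal_add ha ha, two_mul]

/-- **Lemma (probability computation).** Let `M ≥ 1`, `r ∈ (0,1)` and `ϑ` uniform on `[0,2π]`.
Then `P( (1-r²)/|1-r e^{iϑ}|^{2M} > 1 ) = arccos(u_r)/π` where
`u_r = (1 + r² - (1-r²)^{1/M})/(2r)`; moreover `u_r ∈ [-1,1]`. -/
theorem statement15 (M : ℕ) (hM : 1 ≤ M) (r : ℝ) (hr0 : 0 < r) (hr1 : r < 1) :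
    (-1 ≤ (1 + r ^ 2 - (1 - r ^ 2) ^ ((1 : ℝ) / M)) / (2 * r) ∧
      (1 + r ^ 2 - (1 - r ^ 2) ^ ((1 : ℝ) / M)) / (2 * r) ≤ 1) ∧
    (volume {t : ℝ | t ∈ Set.Icc (0 : ℝ) (2 * Real.pi) ∧
        1 < (1 - r ^ 2) / ‖(1 : ℂ) - (r : ℂ) * Complex.exp ((t : ℂ) * Complex.I)‖ ^ (2 * M)}).toReal
      / (2 * Real.pi)
    = Real.arccos ((1 + r ^ 2 - (1 - r ^ 2) ^ ((1 : ℝ) / M)) / (2 * r)) / Real.pi := by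
  set v := (1 - r ^ 2) ^ ((1 : ℝ) / M)
  set u := (1 + r ^ 2 - v) / (2 * r)
  have hu : u ∈ Icc (-1) 1 :=
    one_add_sq_sub_div_two_mul_mem_Icc hr0 (one_sub_sq_rpow_mem_Icc hr0 hr1 hM)
  have hevent : ∀ t : ℝ,
      1 < (1 - r ^ 2) / ‖(1 : ℂ) - (r : ℂ) * exp ((t : ℂ) * I)‖ ^ (2 * M) ↔ u < Real.cos t := by
    intro t
    have hw : 0 < 1 + r ^ 2 - 2 * r * Real.cos t := by nlinarith [Real.cos_le_one t]
    rw [pow_mul, norm_one_sub_ofReal_mul_exp_sq,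
      one_lt_div_pow_iff_lt_rpow (by nlinarith) hw (by omega), div_lt_iff₀ (by positivity)]
    constructor <;> intro h <;> linarith
  refine ⟨hu, ?_⟩
  simp_rw [hevent]
  rw [volume_setOf_lt_cos hu, ENNReal.toReal_ofReal (by positivity [Real.arccos_nonneg u])]
  field_simp
end
end
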